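/- arXiv:1810.02879 — 2 statements merged into one kernel-verified Lean document; each statement's English description precedes it below -/
import Mathlib

section
/- (Equation in hyperbolic coordinates.) Let 3 < p < 5 and let u be a C² radially symmetric solution of u_tt − Δu + |u|^{p−1}u = 0 on the region {(t,x) ∈ ℝ × ℝ³ : t > 0, t² − |x|² ≥ 1}. Define ũ(τ,s) = (e^τ sinh(s)/s) u(e^τ cosh(s), e^τ sinh(s)) for s > 0 and τ in the appropriate range. Then ũ solves (∂_ττ − ∂_ss − (2/s)∂_s) ũ(τ,s) + e^{−(p−3)τ} (s/sinh(s))^{p−1} |ũ(τ,s)|^{p−1} ũ(τ,s) = 0. -/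
open MeasureTheory Real Set Filter Topology
open scoped FourierTransform ENNReal NNReal

noncomputable section

abbrev E3 := EuclideanSpace ℝ (Fin 3)

/-- A function on `ℝ³` is radially symmetric. -/
def IsRadial (f : E3 → ℝ) : Prop := ∀ x y : E3, ‖x‖ = ‖y‖ → f x = f y

/-- The homogeneous Sobolev norm `‖f‖_{Ḣ^s(ℝ³)} = ‖ |ξ|^s f̂(ξ) ‖_{L²}`. -/
def sobNorm (s : ℝ) (f : E3 → ℝ) : ℝ≥0∞ :=
  (∫⁻ ξ : E3, ENNReal.ofReal (‖ξ‖ ^ (2 * s)) *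
      (‖𝓕 (fun x => (f x : ℂ)) ξ‖₊ : ℝ≥0∞) ^ (2 : ℝ)) ^ (1 / 2 : ℝ)

/-- Membership in the homogeneous Sobolev space `Ḣ^s(ℝ³)`. -/
def MemSob (s : ℝ) (f : E3 → ℝ) : Prop := sobNorm s f < ⊤

/-- The critical Sobolev exponent `s_c = 3/2 - 2/(p-1)`. -/
def sCrit (p : ℝ) : ℝ := 3 / 2 - 2 / (p - 1)

/-- Time derivative `∂_t u`. -/
def timeDeriv {α : Type*} (u : ℝ → α → ℝ) : ℝ → α → ℝ := fun t x => deriv (fun s => u s x) t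

/-- Second time derivative `∂_tt u`. -/
def timeDeriv2 {α : Type*} (u : ℝ → α → ℝ) : ℝ → α → ℝ := timeDeriv (timeDeriv u)

/-- The Laplacian on `ℝ³`, as the sum of second partial derivatives. -/
def lap (f : E3 → ℝ) (x : E3) : ℝ :=
  ∑ i : Fin 3, iteratedFDeriv ℝ 2 f x ![EuclideanSpace.single i (1 : ℝ), EuclideanSpace.single i (1 : ℝ)]

/-- `u` solves the defocusing nonlinear wave equation `u_tt - Δu + |u|^{p-1}u = 0`
for times `t ∈ I`. -/
def IsNLWSol (p : ℝ) (I : Set ℝ) (u : ℝ → E3 → ℝ) : Prop :=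
  ∀ t ∈ I, ∀ x : E3, timeDeriv2 u t x - lap (u t) x + |u t x| ^ (p - 1) * u t x = 0

/-- The Fourier multiplier symbol of the free wave propagator
`S(t)(f,g) = cos(t√(-Δ)) f + (sin(t√(-Δ))/√(-Δ)) g`. -/
def waveSymbol (t : ℝ) (f g : E3 → ℝ) (ξ : E3) : ℂ :=
  (Real.cos (2 * π * t * ‖ξ‖) : ℂ) * 𝓕 (fun x => (f x : ℂ)) ξ +
    (if ‖ξ‖ = 0 then (t : ℂ) else ((Real.sin (2 * π * t * ‖ξ‖) / (2 * π * ‖ξ‖) : ℝ) : ℂ)) *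
      𝓕 (fun x => (g x : ℂ)) ξ

/-- The free wave propagator `S(t)(f,g)`. -/
def waveProp (t : ℝ) (f g : E3 → ℝ) : E3 → ℝ := fun x => (𝓕⁻ (waveSymbol t f g) x).re

/-- The time derivative `∂_t S(t)(f,g)` of the free wave propagator. -/
def wavePropDt (t : ℝ) (f g : E3 → ℝ) : E3 → ℝ := fun x => deriv (fun t' => waveProp t' f g x) t

/-- `u` scatters (along the filter `l`, i.e. forward `atTop` or backward `atBot` in time) to a
free wave with data in `Ḣ^{s_c} × Ḣ^{s_c - 1}`. -/
def ScattersAt (p : ℝ) (u : ℝ → E3 → ℝ) (l : Filter ℝ) : Prop :=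
  ∃ f g : E3 → ℝ, MemSob (sCrit p) f ∧ MemSob (sCrit p - 1) g ∧
    Filter.Tendsto
      (fun t => sobNorm (sCrit p) (fun x => u t x - waveProp t f g x) +
        sobNorm (sCrit p - 1) (fun x => timeDeriv u t x - wavePropDt t f g x)) l (nhds 0)

/-- The space-time Lebesgue norm `‖u‖_{L^q_{t,x}(I × ℝ³)}`. -/
def stNorm (q : ℝ) (I : Set ℝ) (u : ℝ → E3 → ℝ) : ℝ≥0∞ :=
  eLpNorm (fun z : ℝ × E3 => u z.1 z.2) (ENNReal.ofReal q) ((volume.restrict I).prod volume)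

/-- The mixed space-time norm `‖u‖_{L^{pt}_t L^{qx}_x(I × ℝ³)}`. -/
def mixNorm (pt qx : ℝ≥0∞) (I : Set ℝ) (u : ℝ → E3 → ℝ) : ℝ≥0∞ :=
  if pt = ⊤ then essSup (fun t => eLpNorm (u t) qx volume) (volume.restrict I)
  else (∫⁻ t in I, eLpNorm (u t) qx volume ^ pt.toReal) ^ (1 / pt.toReal)

/-- The dual (conjugate) exponent of `a ∈ [1,∞]`. -/
def dualExp (a : ℝ≥0∞) : ℝ≥0∞ := 1 + (a - 1)⁻¹

/-- The energy of `u` at time `t`. -/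
def energy (p : ℝ) (u : ℝ → E3 → ℝ) (t : ℝ) : ℝ :=
  (1 / 2) * (∫ x : E3, (timeDeriv u t x) ^ 2) +
    (1 / 2) * (∫ x : E3, ‖fderiv ℝ (u t) x‖ ^ 2) +
    (1 / (p + 1)) * ∫ x : E3, |u t x| ^ (p + 1)

/-- The Littlewood–Paley projection onto frequencies `|ξ| ≤ N`, given by convolution with
`N³ ψ(N ·)`. -/
def lpLe (ψ : E3 → ℝ) (N : ℝ) (f : E3 → ℝ) : E3 → ℝ :=
  fun x => ∫ y : E3, N ^ 3 * ψ (N • (x - y)) * f y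

/-- `ψ` is an admissible Littlewood–Paley kernel: radial, total integral one, and its Fourier
transform is a bump equal to `1` near the origin. -/
def IsLPKernel (ψ : E3 → ℝ) : Prop :=
  IsRadial ψ ∧ (∫ x : E3, ψ x) = 1 ∧
    (∀ ξ : E3, ‖ξ‖ ≤ 1 → 𝓕 (fun x => (ψ x : ℂ)) ξ = 1) ∧
    (∀ ξ : E3, 2 ≤ ‖ξ‖ → 𝓕 (fun x => (ψ x : ℂ)) ξ = 0)


/-- The hyperbolic-coordinates unknown `ũ(τ,s) = (e^τ sinh s / s) u(e^τ cosh s, e^τ sinh s)`,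
for a radial function `u = u(t,r)`. -/
def hypU (U : ℝ → ℝ → ℝ) : ℝ → ℝ → ℝ := fun τ s =>
  (Real.exp τ * Real.sinh s / s) * U (Real.exp τ * Real.cosh s) (Real.exp τ * Real.sinh s)

/-- The hyperbolic energy of `ũ` at hyperbolic time `τ`. -/
def hypEnergy (p : ℝ) (v : ℝ → ℝ → ℝ) (τ : ℝ) : ℝ :=
  (1 / 2) * (∫ s in Set.Ioi (0 : ℝ), (deriv (v τ) s) ^ 2 * s ^ 2) +
    (1 / 2) * (∫ s in Set.Ioi (0 : ℝ), (timeDeriv v τ s) ^ 2 * s ^ 2) +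
    (1 / (p + 1)) * ∫ s in Set.Ioi (0 : ℝ),
      Real.exp (-(p - 3) * τ) * (s / Real.sinh s) ^ (p - 1) * |v τ s| ^ (p + 1) * s ^ 2


private lemma lin_expand (Λ : (ℝ × ℝ) →L[ℝ] ℝ) (x y : ℝ) :
    Λ (x, y) = x * Λ (1, 0) + y * Λ (0, 1) := by
  have h : ((x, y) : ℝ × ℝ) = x • ((1 : ℝ), (0 : ℝ)) + y • ((0 : ℝ), (1 : ℝ)) := by
    simp [Prod.ext_iff]
  rw [h, map_add, _root_.map_smul, _root_.map_smul, smul_eq_mul, smul_eq_mul]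

private lemma bilin_expand (Λ : (ℝ × ℝ) →L[ℝ] (ℝ × ℝ) →L[ℝ] ℝ) (x y x' y' : ℝ) :
    Λ (x, y) (x', y') = x * x' * Λ (1, 0) (1, 0) + x * y' * Λ (1, 0) (0, 1)
      + y * x' * Λ (0, 1) (1, 0) + y * y' * Λ (0, 1) (0, 1) := by
  have h : ((x, y) : ℝ × ℝ) = x • ((1 : ℝ), (0 : ℝ)) + y • ((0 : ℝ), (1 : ℝ)) := by
    simp [Prod.ext_iff]
  rw [h, map_add, _root_.map_smul, _root_.map_smul, ContinuousLinearMap.add_apply,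
    ContinuousLinearMap.smul_apply, ContinuousLinearMap.smul_apply,
    lin_expand (Λ (1, 0)) x' y', lin_expand (Λ (0, 1)) x' y', smul_eq_mul, smul_eq_mul]
  ring

set_option maxHeartbeats 1600000 in
/-- Equation in hyperbolic coordinates: if `u(t,r)` is a `C²` radial
solution of the NLW on `{t > 0, t² - r² ≥ 1}`, then
`ũ(τ,s) = (e^τ sinh s / s) u(e^τ cosh s, e^τ sinh s)` solves
`(∂_ττ - ∂_ss - (2/s)∂_s)ũ + e^{-(p-3)τ}(s/sinh s)^{p-1}|ũ|^{p-1}ũ = 0`. -/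
theorem hyperbolic_coordinates_equation (p : ℝ) (hp3 : 3 < p) (hp5 : p < 5)
    (u : ℝ → ℝ → ℝ)
    (hreg : ContDiffOn ℝ 2 (fun z : ℝ × ℝ => u z.1 z.2)
      {z : ℝ × ℝ | 0 < z.1 ∧ 1 ≤ z.1 ^ 2 - z.2 ^ 2})
    (hsol : ∀ t r : ℝ, 0 < t → 0 < r → 1 ≤ t ^ 2 - r ^ 2 →
      timeDeriv2 u t r - (deriv (deriv (u t)) r + (2 / r) * deriv (u t) r) +
        |u t r| ^ (p - 1) * u t r = 0) :
    ∀ τ s : ℝ, 0 < τ → 0 < s →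
      timeDeriv2 (hypU u) τ s - deriv (deriv (hypU u τ)) s - (2 / s) * deriv (hypU u τ) s +
        Real.exp (-(p - 3) * τ) * (s / Real.sinh s) ^ (p - 1) *
          (|hypU u τ s| ^ (p - 1) * hypU u τ s) = 0 := by
  intro τ s hτ hs
  set F : ℝ × ℝ → ℝ := fun z => u z.1 z.2 with hFdef
  set Ω : Set (ℝ × ℝ) := {z : ℝ × ℝ | 0 < z.1 ∧ 1 < z.1 ^ 2 - z.2 ^ 2} with hΩdef
  have hΩo : IsOpen Ω := by
    have h1 : IsOpen {z : ℝ × ℝ | 0 < z.1} := isOpen_lt continuous_const continuous_fst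
    have h2 : IsOpen {z : ℝ × ℝ | 1 < z.1 ^ 2 - z.2 ^ 2} :=
      isOpen_lt continuous_const (by fun_prop)
    exact h1.inter h2
  have hF : ContDiffOn ℝ 2 F Ω := hreg.mono (fun z hz => ⟨hz.1, le_of_lt hz.2⟩)
  set L : ℝ × ℝ → (ℝ × ℝ) →L[ℝ] ℝ := fderiv ℝ F with hLdef
  set B : ℝ × ℝ → (ℝ × ℝ) →L[ℝ] (ℝ × ℝ) →L[ℝ] ℝ := fderiv ℝ L with hBdef
  have hFd : ∀ z ∈ Ω, HasFDerivAt F (L z) z := fun z hz =>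
    ((hF.differentiableOn (by norm_num)).differentiableAt (hΩo.mem_nhds hz)).hasFDerivAt
  have hLd : ∀ z ∈ Ω, HasFDerivAt L (B z) z := fun z hz =>
    (((hF.fderiv_of_isOpen (m := 1) hΩo (by norm_num)).differentiableOn (by norm_num)).differentiableAt
      (hΩo.mem_nhds hz)).hasFDerivAt
  have CF : ∀ {γ : ℝ → ℝ × ℝ} {d : ℝ × ℝ} {y : ℝ}, HasDerivAt γ d y → γ y ∈ Ω →
      HasDerivAt (fun x => F (γ x)) (L (γ y) d) y := by
    intro γ d y hγ hzz
    exact (hFd _ hzz).comp_hasDerivAt y hγ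
  have CL : ∀ {γ : ℝ → ℝ × ℝ} {d : ℝ × ℝ} {y : ℝ}, HasDerivAt γ d y → γ y ∈ Ω →
      HasDerivAt (fun x => L (γ x)) (B (γ y) d) y := by
    intro γ d y hγ hzz
    exact (hLd _ hzz).comp_hasDerivAt y hγ
  have hmem : ∀ a b : ℝ, 0 < a →
      ((Real.exp a * Real.cosh b, Real.exp a * Real.sinh b) : ℝ × ℝ) ∈ Ω := by
    intro a b ha
    refine ⟨mul_pos (Real.exp_pos a) (Real.cosh_pos _), ?_⟩
    show (1 : ℝ) < (Real.exp a * Real.cosh b) ^ 2 - (Real.exp a * Real.sinh b) ^ 2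
    have h1 : (Real.exp a * Real.cosh b) ^ 2 - (Real.exp a * Real.sinh b) ^ 2
        = Real.exp a ^ 2 * (Real.cosh b ^ 2 - Real.sinh b ^ 2) := by ring
    rw [h1, Real.cosh_sq_sub_sinh_sq, mul_one]
    nlinarith [Real.add_one_le_exp a]
  -- the point
  have hsinh : 0 < Real.sinh s := Real.sinh_pos_iff.2 hs
  have hr : 0 < Real.exp τ * Real.sinh s := mul_pos (Real.exp_pos τ) hsinh
  have ht : 0 < Real.exp τ * Real.cosh s := mul_pos (Real.exp_pos τ) (Real.cosh_pos s)
  have hz : ((Real.exp τ * Real.cosh s, Real.exp τ * Real.sinh s) : ℝ × ℝ) ∈ Ω := hmem τ s hτ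
  -- PDE in terms of L and B --------------------------------------------------
  have hslice_r : ∀ r' : ℝ, ((Real.exp τ * Real.cosh s, r') : ℝ × ℝ) ∈ Ω →
      HasDerivAt (u (Real.exp τ * Real.cosh s))
        (L (Real.exp τ * Real.cosh s, r') (0, 1)) r' := by
    intro r' hmem'
    have hγ : HasDerivAt (fun y : ℝ => ((Real.exp τ * Real.cosh s, y) : ℝ × ℝ))
        ((0 : ℝ), (1 : ℝ)) r' := (hasDerivAt_const r' _).prodMk (hasDerivAt_id r')
    exact CF hγ hmem'
  have hev_r : deriv (u (Real.exp τ * Real.cosh s)) =ᶠ[𝓝 (Real.exp τ * Real.sinh s)]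
      fun r' => L (Real.exp τ * Real.cosh s, r') (0, 1) := by
    have hNr : IsOpen {r' : ℝ | ((Real.exp τ * Real.cosh s, r') : ℝ × ℝ) ∈ Ω} :=
      hΩo.preimage (by fun_prop)
    filter_upwards [hNr.mem_nhds hz] with r' h using (hslice_r r' h).deriv
  have e2 : deriv (u (Real.exp τ * Real.cosh s)) (Real.exp τ * Real.sinh s)
      = L (Real.exp τ * Real.cosh s, Real.exp τ * Real.sinh s) (0, 1) :=
    (hslice_r _ hz).deriv
  have e3 : deriv (deriv (u (Real.exp τ * Real.cosh s))) (Real.exp τ * Real.sinh s)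
      = B (Real.exp τ * Real.cosh s, Real.exp τ * Real.sinh s) (0, 1) (0, 1) := by
    have hγ : HasDerivAt (fun y : ℝ => ((Real.exp τ * Real.cosh s, y) : ℝ × ℝ))
        ((0 : ℝ), (1 : ℝ)) (Real.exp τ * Real.sinh s) :=
      (hasDerivAt_const _ _).prodMk (hasDerivAt_id _)
    have h1 := (CL hγ hz).clm_apply (hasDerivAt_const (Real.exp τ * Real.sinh s) ((0:ℝ), (1:ℝ)))
    simp only [map_zero, add_zero] at h1
    exact (h1.congr_of_eventuallyEq hev_r).deriv
  have hslice_t : ∀ t' : ℝ, ((t', Real.exp τ * Real.sinh s) : ℝ × ℝ) ∈ Ω →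
      HasDerivAt (fun y => u y (Real.exp τ * Real.sinh s))
        (L (t', Real.exp τ * Real.sinh s) (1, 0)) t' := by
    intro t' hmem'
    have hγ : HasDerivAt (fun y : ℝ => ((y, Real.exp τ * Real.sinh s) : ℝ × ℝ))
        ((1 : ℝ), (0 : ℝ)) t' := (hasDerivAt_id t').prodMk (hasDerivAt_const t' _)
    exact CF hγ hmem'
  have hev_t : (fun t' => timeDeriv u t' (Real.exp τ * Real.sinh s))
      =ᶠ[𝓝 (Real.exp τ * Real.cosh s)]
      fun t' => L (t', Real.exp τ * Real.sinh s) (1, 0) := by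
    have hNt : IsOpen {t' : ℝ | ((t', Real.exp τ * Real.sinh s) : ℝ × ℝ) ∈ Ω} :=
      hΩo.preimage (by fun_prop)
    filter_upwards [hNt.mem_nhds hz] with t' h using (hslice_t t' h).deriv
  have e1 : timeDeriv2 u (Real.exp τ * Real.cosh s) (Real.exp τ * Real.sinh s)
      = B (Real.exp τ * Real.cosh s, Real.exp τ * Real.sinh s) (1, 0) (1, 0) := by
    have hγ : HasDerivAt (fun y : ℝ => ((y, Real.exp τ * Real.sinh s) : ℝ × ℝ))
        ((1 : ℝ), (0 : ℝ)) (Real.exp τ * Real.cosh s) :=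
      (hasDerivAt_id _).prodMk (hasDerivAt_const _ _)
    have h1 := (CL hγ hz).clm_apply (hasDerivAt_const (Real.exp τ * Real.cosh s) ((1:ℝ), (0:ℝ)))
    simp only [map_zero, add_zero] at h1
    exact (h1.congr_of_eventuallyEq hev_t).deriv
  have pde : B (Real.exp τ * Real.cosh s, Real.exp τ * Real.sinh s) (1, 0) (1, 0)
      - (B (Real.exp τ * Real.cosh s, Real.exp τ * Real.sinh s) (0, 1) (0, 1)
        + 2 / (Real.exp τ * Real.sinh s)
          * L (Real.exp τ * Real.cosh s, Real.exp τ * Real.sinh s) (0, 1))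
      + |u (Real.exp τ * Real.cosh s) (Real.exp τ * Real.sinh s)| ^ (p - 1)
        * u (Real.exp τ * Real.cosh s) (Real.exp τ * Real.sinh s) = 0 := by
    have h := hsol _ _ ht hr (le_of_lt hz.2)
    rw [e1, e2, e3] at h
    exact h

  -- tau derivatives ----------------------------------------------------------
  set Pc : ℝ → ℝ × ℝ := fun y => (Real.exp y * Real.cosh s, Real.exp y * Real.sinh s) with hPcdef
  have hPd : ∀ y : ℝ, HasDerivAt Pc (Pc y) y := fun y =>
    ((Real.hasDerivAt_exp y).mul_const _).prodMk ((Real.hasDerivAt_exp y).mul_const _)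
  have hPm : ∀ y : ℝ, 0 < y → Pc y ∈ Ω := fun y hy => hmem y s hy
  set T1 : ℝ → ℝ := fun y =>
    (Real.exp y * Real.sinh s * F (Pc y) + Real.exp y * Real.sinh s * L (Pc y) (Pc y)) / s
    with hT1def
  have hfun1 : (fun y => hypU u y s) = fun y => Real.exp y * Real.sinh s * F (Pc y) / s := by
    funext y
    simp only [hypU, hFdef, hPcdef]
    ring
  have hT1 : ∀ y : ℝ, 0 < y → HasDerivAt (fun y' => hypU u y' s) (T1 y) y := by
    intro y hy
    rw [hfun1]
    have h2 : HasDerivAt (fun y' => F (Pc y')) (L (Pc y) (Pc y)) y := CF (hPd y) (hPm y hy)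
    exact (((Real.hasDerivAt_exp y).mul_const (Real.sinh s)).mul h2).div_const s
  have hevT : (fun y => timeDeriv (hypU u) y s) =ᶠ[𝓝 τ] T1 := by
    filter_upwards [Ioi_mem_nhds hτ] with y hy using (hT1 y hy).deriv
  have h4 : HasDerivAt (fun y => L (Pc y) (Pc y)) (B (Pc τ) (Pc τ) (Pc τ) + L (Pc τ) (Pc τ)) τ :=
    (CL (hPd τ) (hPm τ hτ)).clm_apply (hPd τ)
  have hFP : HasDerivAt (fun y => F (Pc y)) (L (Pc τ) (Pc τ)) τ := CF (hPd τ) (hPm τ hτ)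
  have hT2 := ((((Real.hasDerivAt_exp τ).mul_const (Real.sinh s)).mul hFP).add
      (((Real.hasDerivAt_exp τ).mul_const (Real.sinh s)).mul h4)).div_const s
  have eT : timeDeriv2 (hypU u) τ s = _ := (hT2.congr_of_eventuallyEq hevT).deriv
  -- s derivatives -------------------------------------------------------------
  set Qc : ℝ → ℝ × ℝ := fun y => (Real.exp τ * Real.cosh y, Real.exp τ * Real.sinh y) with hQcdef
  set Qs : ℝ → ℝ × ℝ := fun y => (Real.exp τ * Real.sinh y, Real.exp τ * Real.cosh y) with hQsdef
  have hQd : ∀ y : ℝ, HasDerivAt Qc (Qs y) y := fun y =>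
    ((Real.hasDerivAt_cosh y).const_mul _).prodMk ((Real.hasDerivAt_sinh y).const_mul _)
  have hQsd : ∀ y : ℝ, HasDerivAt Qs (Qc y) y := fun y =>
    ((Real.hasDerivAt_sinh y).const_mul _).prodMk ((Real.hasDerivAt_cosh y).const_mul _)
  have hQm : ∀ y : ℝ, Qc y ∈ Ω := fun y => hmem τ y hτ
  have hfun2 : hypU u τ = fun y => Real.exp τ * Real.sinh y * F (Qc y) / y := by
    funext y
    simp only [hypU, hFdef, hQcdef]
    ring
  have hN : ∀ y : ℝ, HasDerivAt (fun y' => Real.exp τ * Real.sinh y' * F (Qc y'))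
      (Real.exp τ * Real.cosh y * F (Qc y) + Real.exp τ * Real.sinh y * L (Qc y) (Qs y)) y :=
    fun y => ((Real.hasDerivAt_sinh y).const_mul (Real.exp τ)).mul (CF (hQd y) (hQm y))
  set D1 : ℝ → ℝ := fun y =>
    ((Real.exp τ * Real.cosh y * F (Qc y) + Real.exp τ * Real.sinh y * L (Qc y) (Qs y)) * y
      - Real.exp τ * Real.sinh y * F (Qc y) * 1) / y ^ 2 with hD1def
  have hD1 : ∀ y : ℝ, 0 < y → HasDerivAt (hypU u τ) (D1 y) y := by
    intro y hy
    rw [hfun2]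
    exact (hN y).div (hasDerivAt_id y) hy.ne'
  have hevD : deriv (hypU u τ) =ᶠ[𝓝 s] D1 := by
    filter_upwards [Ioi_mem_nhds hs] with y hy using (hD1 y hy).deriv
  have eD1 : deriv (hypU u τ) s = D1 s := (hD1 s hs).deriv
  have hLQQ : HasDerivAt (fun y => L (Qc y) (Qs y)) (B (Qc s) (Qs s) (Qs s) + L (Qc s) (Qc s)) s :=
    (CL (hQd s) (hQm s)).clm_apply (hQsd s)
  have hN1 := (((Real.hasDerivAt_cosh s).const_mul (Real.exp τ)).mul (CF (hQd s) (hQm s))).add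
      (((Real.hasDerivAt_sinh s).const_mul (Real.exp τ)).mul hLQQ)
  have hnum := (hN1.mul (hasDerivAt_id s)).sub ((hN s).mul_const 1)
  have hD2full := hnum.div (hasDerivAt_pow 2 s) (pow_ne_zero 2 hs.ne')
  have eD2 : deriv (deriv (hypU u τ)) s = _ := (hD2full.congr_of_eventuallyEq hevD).deriv
  -- nonlinear term ------------------------------------------------------------
  have hXpos : 0 < Real.exp τ * Real.sinh s / s := div_pos hr hs
  have hNL : Real.exp (-(p - 3) * τ) * (s / Real.sinh s) ^ (p - 1) *
      (|hypU u τ s| ^ (p - 1) * hypU u τ s)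
      = Real.exp τ * Real.exp τ * (Real.exp τ * Real.sinh s / s *
        (|F (Qc s)| ^ (p - 1) * F (Qc s))) := by
    have h1 : hypU u τ s = Real.exp τ * Real.sinh s / s * F (Qc s) := rfl
    have hA : (s / Real.sinh s) ^ (p - 1) * (Real.exp τ * Real.sinh s / s) ^ (p - 1)
        = Real.exp (τ * (p - 1)) := by
      rw [← Real.mul_rpow (by positivity) hXpos.le]
      have h2 : s / Real.sinh s * (Real.exp τ * Real.sinh s / s) = Real.exp τ := by
        field_simp
      rw [h2, ← Real.exp_mul]
    have hB : Real.exp (-(p - 3) * τ) * Real.exp (τ * (p - 1)) = Real.exp τ * Real.exp τ := by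
      rw [← Real.exp_add, show -(p - 3) * τ + τ * (p - 1) = τ + τ by ring, Real.exp_add]
    rw [h1, abs_mul, abs_of_pos hXpos, Real.mul_rpow hXpos.le (abs_nonneg _)]
    calc Real.exp (-(p - 3) * τ) * (s / Real.sinh s) ^ (p - 1) *
        ((Real.exp τ * Real.sinh s / s) ^ (p - 1) * |F (Qc s)| ^ (p - 1) *
          (Real.exp τ * Real.sinh s / s * F (Qc s)))
        = Real.exp (-(p - 3) * τ) * ((s / Real.sinh s) ^ (p - 1) *
            (Real.exp τ * Real.sinh s / s) ^ (p - 1)) *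
          (Real.exp τ * Real.sinh s / s * (|F (Qc s)| ^ (p - 1) * F (Qc s))) := by ring
      _ = Real.exp τ * Real.exp τ * (Real.exp τ * Real.sinh s / s *
            (|F (Qc s)| ^ (p - 1) * F (Qc s))) := by rw [hA, hB]
  -- assembly ------------------------------------------------------------------
  rw [eT, eD2, eD1, hNL]
  simp only [hD1def, hPcdef, hQcdef, hQsdef, hFdef]
  rw [lin_expand (L (Real.exp τ * Real.cosh s, Real.exp τ * Real.sinh s))
        (Real.exp τ * Real.cosh s) (Real.exp τ * Real.sinh s),
      lin_expand (L (Real.exp τ * Real.cosh s, Real.exp τ * Real.sinh s))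
        (Real.exp τ * Real.sinh s) (Real.exp τ * Real.cosh s),
      bilin_expand (B (Real.exp τ * Real.cosh s, Real.exp τ * Real.sinh s))
        (Real.exp τ * Real.cosh s) (Real.exp τ * Real.sinh s)
        (Real.exp τ * Real.cosh s) (Real.exp τ * Real.sinh s),
      bilin_expand (B (Real.exp τ * Real.cosh s, Real.exp τ * Real.sinh s))
        (Real.exp τ * Real.sinh s) (Real.exp τ * Real.cosh s)
        (Real.exp τ * Real.sinh s) (Real.exp τ * Real.cosh s)]
  have hcs : Real.cosh s ^ 2 - Real.sinh s ^ 2 = 1 := Real.cosh_sq_sub_sinh_sq s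
  have hrr : (Real.exp τ * Real.sinh s) * (2 / (Real.exp τ * Real.sinh s)) = 2 := by
    field_simp
  have key : Real.exp τ * Real.sinh s
        * B (Real.exp τ * Real.cosh s, Real.exp τ * Real.sinh s) (1, 0) (1, 0)
      - Real.exp τ * Real.sinh s
        * B (Real.exp τ * Real.cosh s, Real.exp τ * Real.sinh s) (0, 1) (0, 1)
      - 2 * L (Real.exp τ * Real.cosh s, Real.exp τ * Real.sinh s) (0, 1)
      + Real.exp τ * Real.sinh s
        * (|u (Real.exp τ * Real.cosh s) (Real.exp τ * Real.sinh s)| ^ (p - 1)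
          * u (Real.exp τ * Real.cosh s) (Real.exp τ * Real.sinh s)) = 0 := by
    linear_combination (Real.exp τ * Real.sinh s) * pde
      + L (Real.exp τ * Real.cosh s, Real.exp τ * Real.sinh s) (0, 1) * hrr
  have hs0 : s ≠ 0 := ne_of_gt hs
  simp only [id_eq, pow_one, mul_one, Nat.cast_ofNat, Pi.add_apply, Pi.mul_apply, Pi.sub_apply]
  rw [lin_expand (L (Real.exp τ * Real.cosh s, Real.exp τ * Real.sinh s))
        (Real.exp τ * Real.sinh s) (Real.exp τ * Real.cosh s)]
  field_simp
  linear_combination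
    (s ^ 3 * Real.exp τ * Real.exp τ * (Real.cosh s ^ 2 - Real.sinh s ^ 2)) * key
    - (s ^ 3 * Real.exp τ * Real.exp τ * Real.exp τ * Real.sinh s *
        (|u (Real.exp τ * Real.cosh s) (Real.exp τ * Real.sinh s)| ^ (p - 1) *
          u (Real.exp τ * Real.cosh s) (Real.exp τ * Real.sinh s))) * hcs


end
end

section
/- (Monotonicity of the hyperbolic energy.) Let 3 < p < 5 and let ũ(τ,s) be a sufficiently smooth, decaying solution of (∂_ττ − ∂_ss − (2/s)∂_s) ũ + e^{−(p−3)τ}(s/sinh(s))^{p−1}|ũ|^{p−1}ũ = 0 for s > 0 with finite hyperbolic energy E(ũ)(τ) = ½∫₀^∞ (∂_s ũ(τ,s))² s² ds + ½∫₀^∞ (∂_τ ũ(τ,s))² s² ds + (1/(p+1))∫₀^∞ e^{−(p−3)τ}(s/sinh(s))^{p−1}|ũ(τ,s)|^{p+1} s² ds. Then (d/dτ) E(ũ)(τ) = −((p−3)/(p+1)) ∫₀^∞ e^{−(p−3)τ}(s/sinh(s))^{p−1}|ũ(τ,s)|^{p+1} s² ds ≤ 0; in particular E(ũ)(τ) is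 non-increasing in τ. -/
open MeasureTheory Real Set Filter Topology
open scoped FourierTransform ENNReal NNReal

noncomputable section

namespace HypAux


/-- Directional (partial) derivative of a function on `ℝ × ℝ`. -/
def pd (e : ℝ × ℝ) (f : ℝ × ℝ → ℝ) (z : ℝ × ℝ) : ℝ := fderiv ℝ f z e

def Wf (v : ℝ → ℝ → ℝ) : ℝ × ℝ → ℝ := fun z => v z.1 z.2
def pA (v : ℝ → ℝ → ℝ) : ℝ × ℝ → ℝ := pd (1, 0) (Wf v)
def pB (v : ℝ → ℝ → ℝ) : ℝ × ℝ → ℝ := pd (0, 1) (Wf v)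
def pAt (v : ℝ → ℝ → ℝ) : ℝ × ℝ → ℝ := pd (1, 0) (pA v)
def pAs (v : ℝ → ℝ → ℝ) : ℝ × ℝ → ℝ := pd (0, 1) (pA v)
def pBt (v : ℝ → ℝ → ℝ) : ℝ × ℝ → ℝ := pd (1, 0) (pB v)
def pBs (v : ℝ → ℝ → ℝ) : ℝ × ℝ → ℝ := pd (0, 1) (pB v)
def wgt (p s : ℝ) : ℝ := (s / Real.sinh s) ^ (p - 1)
def P0f (v : ℝ → ℝ → ℝ) (z : ℝ × ℝ) : ℝ :=
  (1/2) * pB v z ^ 2 * z.2 ^ 2 + (1/2) * pA v z ^ 2 * z.2 ^ 2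
def Q0f (p : ℝ) (v : ℝ → ℝ → ℝ) (z : ℝ × ℝ) : ℝ := (1/(p+1)) * |Wf v z| ^ (p+1) * z.2 ^ 2
def QDf (p : ℝ) (v : ℝ → ℝ → ℝ) (z : ℝ × ℝ) : ℝ :=
  |Wf v z| ^ (p-1) * Wf v z * pA v z * z.2 ^ 2
def PPf (v : ℝ → ℝ → ℝ) (z : ℝ × ℝ) : ℝ :=
  pB v z * pBt v z * z.2 ^ 2 + pA v z * pAt v z * z.2 ^ 2
def Phi (p : ℝ) (v : ℝ → ℝ → ℝ) (τ s : ℝ) : ℝ :=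
  P0f v (τ, s) + Real.exp (-(p-3)*τ) * Q0f p v (τ, s) * wgt p s
def Phi' (p : ℝ) (v : ℝ → ℝ → ℝ) (τ s : ℝ) : ℝ :=
  PPf v (τ, s) +
    (-(p-3) * Real.exp (-(p-3)*τ) * Q0f p v (τ, s) + Real.exp (-(p-3)*τ) * QDf p v (τ, s)) *
      wgt p s

lemma hasDerivAt_pd_fst {f : ℝ × ℝ → ℝ} (hf : Differentiable ℝ f) (τ s : ℝ) :
    HasDerivAt (fun t => f (t, s)) (pd (1, 0) f (τ, s)) τ := by
  have h := (hf (τ, s)).hasFDerivAt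
  have hline : HasDerivAt (fun t : ℝ => ((t, s) : ℝ × ℝ)) ((1 : ℝ), (0 : ℝ)) τ :=
    (hasDerivAt_id τ).prodMk (hasDerivAt_const τ s)
  exact h.comp_hasDerivAt τ hline

lemma hasDerivAt_pd_snd {f : ℝ × ℝ → ℝ} (hf : Differentiable ℝ f) (τ s : ℝ) :
    HasDerivAt (fun y => f (τ, y)) (pd (0, 1) f (τ, s)) s := by
  have h := (hf (τ, s)).hasFDerivAt
  have hline : HasDerivAt (fun y : ℝ => ((τ, y) : ℝ × ℝ)) ((0 : ℝ), (1 : ℝ)) s :=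
    (hasDerivAt_const s τ).prodMk (hasDerivAt_id s)
  exact h.comp_hasDerivAt s hline

lemma contDiff_pd (e : ℝ × ℝ) {f : ℝ × ℝ → ℝ} (hf : ContDiff ℝ 2 f) :
    ContDiff ℝ 1 (pd e f) :=
  (hf.fderiv_right (by norm_num : (1 : WithTop ℕ∞) + 1 ≤ 2)).clm_apply contDiff_const

lemma continuous_pd (e : ℝ × ℝ) {f : ℝ × ℝ → ℝ} (hf : ContDiff ℝ 1 f) :
    Continuous (pd e f) :=
  ((hf.fderiv_right (by norm_num : (0 : WithTop ℕ∞) + 1 ≤ 1)).clm_apply contDiff_const).continuous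

lemma hasFDerivAt_pd (e : ℝ × ℝ) {f : ℝ × ℝ → ℝ} (hf : ContDiff ℝ 2 f) (z : ℝ × ℝ) :
    HasFDerivAt (pd e f) ((fderiv ℝ (fderiv ℝ f) z).flip e) z := by
  have h1 : ContDiff ℝ 1 (fderiv ℝ f) := hf.fderiv_right (by norm_num : (1 : WithTop ℕ∞) + 1 ≤ 2)
  have h2 : HasFDerivAt (fderiv ℝ f) (fderiv ℝ (fderiv ℝ f) z) z :=
    ((h1.differentiable one_ne_zero) z).hasFDerivAt
  have h3 := h2.clm_apply (hasFDerivAt_const e z)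
  simp only [ContinuousLinearMap.comp_zero, zero_add] at h3
  exact h3

lemma pd_comm {f : ℝ × ℝ → ℝ} (hf : ContDiff ℝ 2 f) (z : ℝ × ℝ) :
    pd (1, 0) (pd (0, 1) f) z = pd (0, 1) (pd (1, 0) f) z := by
  have hdiff : ∀ y, HasFDerivAt f (fderiv ℝ f y) y := fun y =>
    ((hf.differentiable (by norm_num)) y).hasFDerivAt
  have h2 : HasFDerivAt (fderiv ℝ f) (fderiv ℝ (fderiv ℝ f) z) z :=
    (((hf.fderiv_right (by norm_num : (1 : WithTop ℕ∞) + 1 ≤ 2)).differentiable one_ne_zero)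
      z).hasFDerivAt
  have hsymm := second_derivative_symmetric hdiff h2 (1, 0) (0, 1)
  have e1 : pd (1, 0) (pd (0, 1) f) z = fderiv ℝ (fderiv ℝ f) z (1, 0) (0, 1) := by
    have := (hasFDerivAt_pd (0, 1) hf z).fderiv
    simp [pd, this]
  have e2 : pd (0, 1) (pd (1, 0) f) z = fderiv ℝ (fderiv ℝ f) z (0, 1) (1, 0) := by
    have := (hasFDerivAt_pd (1, 0) hf z).fderiv
    simp [pd, this]
  rw [e1, e2, hsymm]

lemma hasDerivAt_pd2_fst (e : ℝ × ℝ) {f : ℝ × ℝ → ℝ} (hf : ContDiff ℝ 2 f) (τ s : ℝ) :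
    HasDerivAt (fun t => pd e f (t, s)) (pd (1, 0) (pd e f) (τ, s)) τ :=
  hasDerivAt_pd_fst ((contDiff_pd e hf).differentiable one_ne_zero) τ s

lemma hasDerivAt_pd2_snd (e : ℝ × ℝ) {f : ℝ × ℝ → ℝ} (hf : ContDiff ℝ 2 f) (τ s : ℝ) :
    HasDerivAt (fun y => pd e f (τ, y)) (pd (0, 1) (pd e f) (τ, s)) s :=
  hasDerivAt_pd_snd ((contDiff_pd e hf).differentiable one_ne_zero) τ s

lemma pd_zero_of_zero {g : ℝ × ℝ → ℝ} {R : ℝ} (e : ℝ × ℝ)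
    (h : ∀ w : ℝ × ℝ, R < w.2 → g w = 0) {z : ℝ × ℝ} (hz : R < z.2) : pd e g z = 0 := by
  have hopen : IsOpen {w : ℝ × ℝ | R < w.2} := isOpen_lt continuous_const continuous_snd
  have hev : g =ᶠ[nhds z] (fun _ => (0 : ℝ)) := by
    filter_upwards [hopen.mem_nhds hz] with w hw using h w hw
  rw [pd, hev.fderiv_eq]
  simp

lemma rpow_split {x q : ℝ} (hx : 0 < x) : x ^ (q - 1) = x ^ (q - 2) * x := by
  rw [show q - 1 = q - 2 + 1 by ring, Real.rpow_add hx, Real.rpow_one]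

lemma hasDerivAt_abs_rpow {q : ℝ} (hq : 1 < q) (x : ℝ) :
    HasDerivAt (fun y : ℝ => |y| ^ q) (q * |x| ^ (q - 2) * x) x := by
  rcases lt_trichotomy x 0 with hx | hx | hx
  · have hne : -x ≠ 0 := neg_ne_zero.mpr (ne_of_lt hx)
    have h0 : HasDerivAt (fun y : ℝ => y ^ q) (q * (-x) ^ (q - 1)) (-x) :=
      Real.hasDerivAt_rpow_const (Or.inl hne)
    have h1 : HasDerivAt (fun y : ℝ => (-y) ^ q) (q * (-x) ^ (q - 1) * (-1)) x :=
      HasDerivAt.comp x h0 (hasDerivAt_neg x)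
    have h2 : (fun y : ℝ => |y| ^ q) =ᶠ[nhds x] (fun y : ℝ => (-y) ^ q) := by
      filter_upwards [Iio_mem_nhds hx] with y (hy : y < 0)
      rw [abs_of_neg hy]
    have h3 := h1.congr_of_eventuallyEq h2
    refine h3.congr_deriv ?_
    rw [abs_of_neg hx, rpow_split (by linarith : (0:ℝ) < -x)]
    ring
  · subst hx
    have hmain : HasDerivAt (fun y : ℝ => |y| ^ q) 0 0 := by
      rw [hasDerivAt_iff_tendsto_slope]
      have hb : Tendsto (fun y : ℝ => |y| ^ (q - 1)) (nhdsWithin 0 {(0:ℝ)}ᶜ) (nhds 0) := by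
        have hc : ContinuousAt (fun y : ℝ => |y| ^ (q - 1)) 0 :=
          ContinuousAt.rpow_const continuous_abs.continuousAt (Or.inr (by linarith))
        have := hc.tendsto
        simp only [abs_zero, Real.zero_rpow (by linarith : q - 1 ≠ 0)] at this
        exact this.mono_left nhdsWithin_le_nhds
      apply squeeze_zero_norm' _ hb
      filter_upwards [self_mem_nhdsWithin] with y (hy : y ≠ 0)
      have hay : (0:ℝ) < |y| := abs_pos.mpr hy
      have e0 : |(0:ℝ)| ^ q = 0 := by simp [Real.zero_rpow (by linarith : q ≠ 0)]
      have : ‖slope (fun y : ℝ => |y| ^ q) 0 y‖ = |y| ^ (q - 1) := by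
        calc ‖slope (fun y : ℝ => |y| ^ q) 0 y‖ = abs (|y| ^ q / y) := by
              rw [slope_def_field, e0, Real.norm_eq_abs]; norm_num
          _ = |y| ^ q / |y| := by
              rw [abs_div, abs_of_nonneg (Real.rpow_nonneg (abs_nonneg y) q)]
          _ = |y| ^ (q - 1) := by
              rw [show q = q - 1 + 1 by ring, Real.rpow_add hay, Real.rpow_one]
              field_simp
              ring_nf
      exact le_of_eq this
    simpa using hmain
  · have h0 : HasDerivAt (fun y : ℝ => y ^ q) (q * x ^ (q - 1)) x :=
      Real.hasDerivAt_rpow_const (Or.inl (ne_of_gt hx))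
    have h2 : (fun y : ℝ => |y| ^ q) =ᶠ[nhds x] (fun y : ℝ => y ^ q) := by
      filter_upwards [Ioi_mem_nhds hx] with y (hy : 0 < y)
      rw [abs_of_pos hy]
    have h3 := h0.congr_of_eventuallyEq h2
    refine h3.congr_deriv ?_
    rw [abs_of_pos hx, rpow_split hx]
    ring

lemma integrable_indicator_Ioc (R C : ℝ) :
    Integrable (Set.indicator (Ioc (0:ℝ) R) (fun _ => C))
      ((volume : Measure ℝ).restrict (Ioi 0)) := by
  refine Integrable.restrict ?_
  rw [integrable_indicator_iff measurableSet_Ioc]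
  exact (integrableOn_const_iff).mpr (Or.inr (by simp))

lemma integrableOn_of_bound {f : ℝ → ℝ} {R C : ℝ}
    (hm : AEStronglyMeasurable f ((volume : Measure ℝ).restrict (Ioi 0)))
    (hb : ∀ s, 0 < s → |f s| ≤ Set.indicator (Ioc (0:ℝ) R) (fun _ => C) s) :
    IntegrableOn f (Ioi 0) := by
  refine Integrable.mono' (integrable_indicator_Ioc R C) hm ?_
  rw [ae_restrict_iff' measurableSet_Ioi]
  exact ae_of_all _ fun s hs => hb s hs

lemma integrableOn_of_cont {f : ℝ → ℝ} {R : ℝ} (hR : 0 ≤ R) (hf : Continuous f)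
    (h0 : ∀ s, R < s → f s = 0) : IntegrableOn f (Ioi 0) := by
  have h1 : IntegrableOn f (Ioc 0 R) :=
    (hf.continuousOn.integrableOn_Icc).mono_set Ioc_subset_Icc_self
  have h2 : IntegrableOn f (Ioi R) :=
    (integrableOn_congr_fun (g := fun _ => (0:ℝ)) (fun x hx => h0 x hx) measurableSet_Ioi).mpr
      ((integrableOn_const_iff).mpr (Or.inl (by simp)))
  have h3 := h1.union h2
  rwa [Ioc_union_Ioi_eq_Ioi hR] at h3

lemma bound_mul_wgt {E Q w Mq Cexp : ℝ} (hE : 0 < E) (hEc : E ≤ Cexp) (hq : |Q| ≤ Mq)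
    (hw0 : 0 ≤ w) (hw1 : w ≤ 1) : |E * Q * w| ≤ Cexp * Mq := by
  rw [abs_mul, abs_mul, abs_of_pos hE, abs_of_nonneg hw0]
  have h0q : 0 ≤ Mq := le_trans (abs_nonneg Q) hq
  calc E * |Q| * w ≤ E * |Q| * 1 := by
        apply mul_le_mul_of_nonneg_left hw1 (by positivity)
    _ = E * |Q| := by ring
    _ ≤ Cexp * Mq := mul_le_mul hEc hq (abs_nonneg Q) (by linarith)



theorem main_aux (p : ℝ) (hp3 : 3 < p) (v : ℝ → ℝ → ℝ)
    (hreg : ContDiff ℝ 2 (Wf v)) (R : ℝ) (hR1 : 1 ≤ R)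
    (hvR : ∀ τ s : ℝ, R ≤ s → v τ s = 0)
    (hsol : ∀ τ s : ℝ, 0 < s →
      timeDeriv2 v τ s - deriv (deriv (v τ)) s - (2 / s) * deriv (v τ) s +
        Real.exp (-(p - 3) * τ) * (s / Real.sinh s) ^ (p - 1) *
          (|v τ s| ^ (p - 1) * v τ s) = 0) (τ₀ : ℝ) :
    HasDerivAt (fun τ => ∫ s in Ioi (0:ℝ), Phi p v τ s)
      (-((p - 3) / (p + 1)) * ∫ s in Ioi (0:ℝ),
        Real.exp (-(p - 3) * τ₀) * (s / Real.sinh s) ^ (p - 1) * |v τ₀ s| ^ (p + 1) * s ^ 2)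
      τ₀ := by
  have hR0 : (0:ℝ) ≤ R := by linarith
  have hp1 : (0:ℝ) < p + 1 := by linarith
  have hWd : Differentiable ℝ (Wf v) := hreg.differentiable (by norm_num)
  have hWc : Continuous (Wf v) := hreg.continuous
  have hA1 : ContDiff ℝ 1 (pA v) := contDiff_pd _ hreg
  have hB1 : ContDiff ℝ 1 (pB v) := contDiff_pd _ hreg
  have hAc : Continuous (pA v) := hA1.continuous
  have hBc : Continuous (pB v) := hB1.continuous
  have hAtc : Continuous (pAt v) := continuous_pd _ hA1
  have hAsc : Continuous (pAs v) := continuous_pd _ hA1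
  have hBtc : Continuous (pBt v) := continuous_pd _ hB1
  have hBsc : Continuous (pBs v) := continuous_pd _ hB1
  have htd : ∀ τ s : ℝ, timeDeriv v τ s = pA v (τ, s) := fun τ s =>
    (hasDerivAt_pd_fst hWd τ s).deriv
  have hsd : ∀ τ s : ℝ, deriv (v τ) s = pB v (τ, s) := fun τ s =>
    (hasDerivAt_pd_snd hWd τ s).deriv
  have htd2 : ∀ τ s : ℝ, timeDeriv2 v τ s = pAt v (τ, s) := by
    intro τ s
    have h1 : (fun t => timeDeriv v t s) = fun t => pA v (t, s) := funext fun t => htd t s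
    show deriv (fun t => timeDeriv v t s) τ = _
    rw [h1]
    exact (hasDerivAt_pd2_fst (1, 0) hreg τ s).deriv
  have hsd2 : ∀ τ s : ℝ, deriv (deriv (v τ)) s = pBs v (τ, s) := by
    intro τ s
    have h1 : deriv (v τ) = fun y => pB v (τ, y) := funext fun y => hsd τ y
    rw [h1]
    exact (hasDerivAt_pd2_snd (0, 1) hreg τ s).deriv
  -- vanishing for s > R
  have hWv : ∀ z : ℝ × ℝ, R < z.2 → Wf v z = 0 := fun z hz => hvR z.1 z.2 hz.le
  have hAv : ∀ z, R < z.2 → pA v z = 0 := fun z hz => pd_zero_of_zero _ hWv hz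
  have hBv : ∀ z, R < z.2 → pB v z = 0 := fun z hz => pd_zero_of_zero _ hWv hz
  have hAtv : ∀ z, R < z.2 → pAt v z = 0 := fun z hz => pd_zero_of_zero _ hAv hz
  have hAsv : ∀ z, R < z.2 → pAs v z = 0 := fun z hz => pd_zero_of_zero _ hAv hz
  have hBsv : ∀ z, R < z.2 → pBs v z = 0 := fun z hz => pd_zero_of_zero _ hBv hz
  have hBtv : ∀ z, R < z.2 → pBt v z = 0 := fun z hz => pd_zero_of_zero _ hBv hz
  have hQ0v : ∀ z : ℝ × ℝ, R < z.2 → Q0f p v z = 0 := by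
    intro z hz
    simp [Q0f, hWv z hz, Real.zero_rpow (by linarith : p + 1 ≠ 0)]
  have hQDv : ∀ z : ℝ × ℝ, R < z.2 → QDf p v z = 0 := by
    intro z hz; simp [QDf, hWv z hz]
  have hP0v : ∀ z : ℝ × ℝ, R < z.2 → P0f v z = 0 := by
    intro z hz; simp [P0f, hAv z hz, hBv z hz]
  have hPPv : ∀ z : ℝ × ℝ, R < z.2 → PPf v z = 0 := by
    intro z hz; simp [PPf, hAv z hz, hBv z hz]
  -- weight facts
  have hw0 : ∀ s : ℝ, 0 < s → 0 ≤ wgt p s := fun s hs =>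
    Real.rpow_nonneg (div_nonneg hs.le (Real.sinh_pos_iff.mpr hs).le) _
  have hw1 : ∀ s : ℝ, 0 < s → wgt p s ≤ 1 := by
    intro s hs
    refine Real.rpow_le_one (div_nonneg hs.le (Real.sinh_pos_iff.mpr hs).le) ?_ (by linarith)
    rw [div_le_one (Real.sinh_pos_iff.mpr hs)]
    exact (Real.self_lt_sinh_iff.mpr hs).le
  -- continuity of building blocks
  have hQ0c : Continuous (Q0f p v) :=
    (continuous_const.mul (hWc.abs.rpow_const fun z => Or.inr (by linarith))).mul
      (continuous_snd.pow 2)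
  have hQDc : Continuous (QDf p v) :=
    (((hWc.abs.rpow_const fun z => Or.inr (by linarith)).mul hWc).mul hAc).mul
      (continuous_snd.pow 2)
  have hP0c : Continuous (P0f v) :=
    ((continuous_const.mul (hBc.pow 2)).mul (continuous_snd.pow 2)).add
      ((continuous_const.mul (hAc.pow 2)).mul (continuous_snd.pow 2))
  have hPPc : Continuous (PPf v) :=
    ((hBc.mul hBtc).mul (continuous_snd.pow 2)).add
      ((hAc.mul hAtc).mul (continuous_snd.pow 2))
  have hwgtm : AEStronglyMeasurable (wgt p) ((volume : Measure ℝ).restrict (Ioi 0)) := by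
    refine ContinuousOn.aestronglyMeasurable ?_ measurableSet_Ioi
    refine ContinuousOn.rpow_const ?_ fun s hs => Or.inr (by linarith)
    exact ContinuousOn.div continuousOn_id Real.continuous_sinh.continuousOn
      fun s hs => ne_of_gt (Real.sinh_pos_iff.mpr hs)
  have hcurve : ∀ τ : ℝ, Continuous fun s : ℝ => ((τ, s) : ℝ × ℝ) := fun τ =>
    continuous_const.prodMk continuous_id
  have hPhim : ∀ τ : ℝ, AEStronglyMeasurable (Phi p v τ)
      ((volume : Measure ℝ).restrict (Ioi 0)) := by
    intro τ
    refine AEStronglyMeasurable.add ?_ ?_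
    · exact (hP0c.comp (hcurve τ)).aestronglyMeasurable
    · exact ((continuous_const.mul (hQ0c.comp (hcurve τ))).aestronglyMeasurable).mul hwgtm
  have hPhi'm : AEStronglyMeasurable (Phi' p v τ₀)
      ((volume : Measure ℝ).restrict (Ioi 0)) := by
    refine AEStronglyMeasurable.add ?_ ?_
    · exact (hPPc.comp (hcurve τ₀)).aestronglyMeasurable
    · refine AEStronglyMeasurable.mul ?_ hwgtm
      exact ((continuous_const.mul (hQ0c.comp (hcurve τ₀))).add
        (continuous_const.mul (hQDc.comp (hcurve τ₀)))).aestronglyMeasurable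
  -- compactness bound
  have hKc : IsCompact (Icc (τ₀ - 1) (τ₀ + 1) ×ˢ Icc (0:ℝ) R) := isCompact_Icc.prod isCompact_Icc
  have hGc : Continuous fun z : ℝ × ℝ =>
      |P0f v z| + |Q0f p v z| + |PPf v z| + |QDf p v z| :=
    ((hP0c.abs.add hQ0c.abs).add hPPc.abs).add hQDc.abs
  obtain ⟨M, hM⟩ := hKc.exists_bound_of_continuousOn hGc.continuousOn
  have hMle : ∀ z ∈ Icc (τ₀ - 1) (τ₀ + 1) ×ˢ Icc (0:ℝ) R,
      |P0f v z| ≤ M ∧ |Q0f p v z| ≤ M ∧ |PPf v z| ≤ M ∧ |QDf p v z| ≤ M := by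
    intro z hz
    have h := hM z hz
    rw [Real.norm_eq_abs] at h
    have h2 := le_trans (le_abs_self _) h
    have a1 := abs_nonneg (P0f v z); have a2 := abs_nonneg (Q0f p v z)
    have a3 := abs_nonneg (PPf v z); have a4 := abs_nonneg (QDf p v z)
    exact ⟨by linarith, by linarith, by linarith, by linarith⟩
  have hmemK : ∀ t ∈ Metric.ball τ₀ 1, ∀ s : ℝ, 0 < s → s ≤ R →
      ((t, s) : ℝ × ℝ) ∈ Icc (τ₀ - 1) (τ₀ + 1) ×ˢ Icc (0:ℝ) R := by
    intro t ht s hs hsR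
    rw [Metric.mem_ball, Real.dist_eq] at ht
    obtain ⟨h1, h2⟩ := abs_lt.mp ht
    exact ⟨⟨by linarith, by linarith⟩, ⟨hs.le, hsR⟩⟩
  have hCexpB : ∀ t ∈ Metric.ball τ₀ 1,
      Real.exp (-(p - 3) * t) ≤ Real.exp (|p - 3| * (|τ₀| + 1)) := by
    intro t ht
    rw [Metric.mem_ball, Real.dist_eq] at ht
    apply Real.exp_le_exp.mpr
    have habs : |t| ≤ |τ₀| + 1 := by
      have := abs_sub_abs_le_abs_sub t τ₀
      linarith
    calc -(p - 3) * t ≤ |(-(p - 3)) * t| := le_abs_self _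
      _ = |p - 3| * |t| := by rw [abs_mul, abs_neg]
      _ ≤ |p - 3| * (|τ₀| + 1) := mul_le_mul_of_nonneg_left habs (abs_nonneg _)
  -- pointwise derivative in τ
  have hDeriv : ∀ s t : ℝ, HasDerivAt (fun τ => Phi p v τ s) (Phi' p v t s) t := by
    intro s t
    have hB' : HasDerivAt (fun τ => pB v (τ, s)) (pBt v (t, s)) t :=
      hasDerivAt_pd2_fst (0, 1) hreg t s
    have hA' : HasDerivAt (fun τ => pA v (τ, s)) (pAt v (t, s)) t :=
      hasDerivAt_pd2_fst (1, 0) hreg t s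
    have hW' : HasDerivAt (fun τ => Wf v (τ, s)) (pA v (t, s)) t := hasDerivAt_pd_fst hWd t s
    have hP0' : HasDerivAt (fun τ => P0f v (τ, s)) (PPf v (t, s)) t := by
      have h1 := ((hB'.pow 2).const_mul ((1:ℝ)/2)).mul_const (s ^ 2)
      have h2 := ((hA'.pow 2).const_mul ((1:ℝ)/2)).mul_const (s ^ 2)
      have h3 := h1.add h2
      simp only [P0f, PPf]
      refine h3.congr_deriv ?_
      push_cast
      ring
    have hlin : HasDerivAt (fun τ : ℝ => -(p - 3) * τ) (-(p - 3)) t := by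
      simpa using (hasDerivAt_id t).const_mul (-(p - 3))
    have hexp' := hlin.exp
    have hQ0' : HasDerivAt (fun τ => Q0f p v (τ, s)) (QDf p v (t, s)) t := by
      have habs := (hasDerivAt_abs_rpow (show (1:ℝ) < p + 1 by linarith) (Wf v (t, s))).comp t hW'
      simp only [Function.comp_def] at habs
      have h2 := (habs.const_mul ((1:ℝ)/(p + 1))).mul_const (s ^ 2)
      simp only [Q0f, QDf]
      refine h2.congr_deriv ?_
      rw [show p + 1 - 2 = p - 1 by ring]
      field_simp
    have htot := hP0'.add ((hexp'.mul hQ0').mul_const (wgt p s))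
    simp only [Phi, Phi']
    refine htot.congr_deriv ?_
    ring
  -- uniform bound for Phi' on the ball
  have hbnd : ∀ s : ℝ, 0 < s → ∀ t ∈ Metric.ball τ₀ 1, ‖Phi' p v t s‖ ≤
      Set.indicator (Ioc (0:ℝ) R)
        (fun _ => M + (|p - 3| * (Real.exp (|p - 3| * (|τ₀| + 1)) * M) +
          Real.exp (|p - 3| * (|τ₀| + 1)) * M)) s := by
    intro s hs t ht
    by_cases hsR : s ≤ R
    · rw [Set.indicator_of_mem (show s ∈ Ioc (0:ℝ) R from ⟨hs, hsR⟩)]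
      obtain ⟨m1, m2, m3, m4⟩ := hMle (t, s) (hmemK t ht s hs hsR)
      have hE := Real.exp_pos (-(p - 3) * t)
      have hEc := hCexpB t ht
      have b1 := bound_mul_wgt hE hEc m2 (hw0 s hs) (hw1 s hs)
      have b2 := bound_mul_wgt hE hEc m4 (hw0 s hs) (hw1 s hs)
      have b3 : |Phi' p v t s| ≤ |PPf v (t, s)| +
          (|p - 3| * |Real.exp (-(p - 3) * t) * Q0f p v (t, s) * wgt p s| +
            |Real.exp (-(p - 3) * t) * QDf p v (t, s) * wgt p s|) := by
        have hre : Phi' p v t s = PPf v (t, s) +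
            ((-(p - 3)) * (Real.exp (-(p - 3) * t) * Q0f p v (t, s) * wgt p s) +
              Real.exp (-(p - 3) * t) * QDf p v (t, s) * wgt p s) := by
          simp only [Phi']; ring
        rw [hre]
        refine (abs_add_le _ _).trans (add_le_add_right ((abs_add_le _ _).trans ?_) _)
        rw [abs_mul, abs_neg]
      rw [Real.norm_eq_abs]
      have b4 := mul_le_mul_of_nonneg_left b1 (abs_nonneg (p - 3))
      linarith
    · push_neg at hsR
      rw [Set.indicator_of_notMem (fun hmem => absurd hmem.2 (not_le.mpr hsR))]
      have : Phi' p v t s = 0 := by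
        simp [Phi', hPPv (t, s) hsR, hQ0v (t, s) hsR, hQDv (t, s) hsR]
      rw [this]; simp
  -- integrability of Phi τ₀
  have hPhiInt : Integrable (Phi p v τ₀) ((volume : Measure ℝ).restrict (Ioi 0)) := by
    refine integrableOn_of_bound (R := R)
      (C := M + Real.exp (|p - 3| * (|τ₀| + 1)) * M) (hPhim τ₀) ?_
    intro s hs
    by_cases hsR : s ≤ R
    · rw [Set.indicator_of_mem (show s ∈ Ioc (0:ℝ) R from ⟨hs, hsR⟩)]
      obtain ⟨m1, m2, m3, m4⟩ := hMle (τ₀, s) (hmemK τ₀ (Metric.mem_ball_self one_pos) s hs hsR)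
      have b1 := bound_mul_wgt (Real.exp_pos _)
        (hCexpB τ₀ (Metric.mem_ball_self one_pos)) m2 (hw0 s hs) (hw1 s hs)
      calc |Phi p v τ₀ s| ≤ |P0f v (τ₀, s)| +
            |Real.exp (-(p - 3) * τ₀) * Q0f p v (τ₀, s) * wgt p s| := by
            rw [Phi]; exact abs_add_le _ _
        _ ≤ M + Real.exp (|p - 3| * (|τ₀| + 1)) * M := add_le_add m1 b1
    · push_neg at hsR
      rw [Set.indicator_of_notMem (fun hmem => absurd hmem.2 (not_le.mpr hsR))]
      have : Phi p v τ₀ s = 0 := by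
        simp [Phi, hP0v (τ₀, s) hsR, hQ0v (τ₀, s) hsR]
      rw [this]; simp
  -- differentiate under the integral sign
  have hkey := (hasDerivAt_integral_of_dominated_loc_of_deriv_le
    (F := Phi p v) (F' := Phi' p v) (μ := (volume : Measure ℝ).restrict (Ioi 0))
    (bound := Set.indicator (Ioc (0:ℝ) R)
      (fun _ => M + (|p - 3| * (Real.exp (|p - 3| * (|τ₀| + 1)) * M) +
        Real.exp (|p - 3| * (|τ₀| + 1)) * M)))
    (Metric.ball_mem_nhds τ₀ one_pos) (Filter.Eventually.of_forall fun τ => hPhim τ) hPhiInt hPhi'm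
    (by
      rw [ae_restrict_iff' measurableSet_Ioi]
      exact ae_of_all _ fun s hs t ht => hbnd s hs t ht)
    (integrable_indicator_Ioc R _)
    (ae_of_all _ fun s t _ => hDeriv s t)).2
  -- identify the value of the derivative
  have hdgc : Continuous fun y : ℝ =>
      pA v (τ₀, y) * pB v (τ₀, y) * y ^ 2 :=
    ((hAc.comp (hcurve τ₀)).mul (hBc.comp (hcurve τ₀))).mul (continuous_pow 2)
  have hdg'c : Continuous fun y : ℝ =>
      pAs v (τ₀, y) * pB v (τ₀, y) * y ^ 2 + pA v (τ₀, y) * pBs v (τ₀, y) * y ^ 2 +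
        pA v (τ₀, y) * pB v (τ₀, y) * (2 * y) :=
    ((((hAsc.comp (hcurve τ₀)).mul (hBc.comp (hcurve τ₀))).mul (continuous_pow 2)).add
      (((hAc.comp (hcurve τ₀)).mul (hBsc.comp (hcurve τ₀))).mul (continuous_pow 2))).add
      (((hAc.comp (hcurve τ₀)).mul (hBc.comp (hcurve τ₀))).mul
        (continuous_const.mul continuous_id))
  have hdgInt : IntegrableOn (fun y : ℝ =>
      pAs v (τ₀, y) * pB v (τ₀, y) * y ^ 2 + pA v (τ₀, y) * pBs v (τ₀, y) * y ^ 2 +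
        pA v (τ₀, y) * pB v (τ₀, y) * (2 * y)) (Ioi 0) := by
    refine integrableOn_of_cont hR0 hdg'c fun s hs => ?_
    simp [hAv (τ₀, s) hs, hBv (τ₀, s) hs]
  have hg' : ∀ s : ℝ, HasDerivAt (fun y : ℝ => pA v (τ₀, y) * pB v (τ₀, y) * y ^ 2)
      (pAs v (τ₀, s) * pB v (τ₀, s) * s ^ 2 + pA v (τ₀, s) * pBs v (τ₀, s) * s ^ 2 +
        pA v (τ₀, s) * pB v (τ₀, s) * (2 * s)) s := by
    intro s
    have h1 : HasDerivAt (fun y => pA v (τ₀, y)) (pAs v (τ₀, s)) s :=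
      hasDerivAt_pd2_snd (1, 0) hreg τ₀ s
    have h2 : HasDerivAt (fun y => pB v (τ₀, y)) (pBs v (τ₀, s)) s :=
      hasDerivAt_pd2_snd (0, 1) hreg τ₀ s
    have h3 := (h1.mul h2).mul (hasDerivAt_pow 2 s)
    refine h3.congr_deriv ?_
    push_cast
    simp only [Pi.mul_apply]
    ring
  have hIBP : (∫ s in Ioi (0:ℝ),
      (pAs v (τ₀, s) * pB v (τ₀, s) * s ^ 2 + pA v (τ₀, s) * pBs v (τ₀, s) * s ^ 2 +
        pA v (τ₀, s) * pB v (τ₀, s) * (2 * s))) = 0 := by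
    have heq : (fun y : ℝ => pA v (τ₀, y) * pB v (τ₀, y) * y ^ 2) =ᶠ[atTop]
        (fun _ => (0:ℝ)) := by
      filter_upwards [Ioi_mem_atTop R] with s hs
      simp [hAv (τ₀, s) hs]
    have h0 : Tendsto (fun y : ℝ => pA v (τ₀, y) * pB v (τ₀, y) * y ^ 2) atTop (nhds 0) :=
      Tendsto.congr' heq.symm tendsto_const_nhds
    have hres := integral_Ioi_of_hasDerivAt_of_tendsto
      (hdgc.continuousWithinAt) (fun x _ => hg' x) hdgInt h0
    simpa using hres
  have hTInt : IntegrableOn (fun s : ℝ =>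
      -(p - 3) * Real.exp (-(p - 3) * τ₀) * Q0f p v (τ₀, s) * wgt p s) (Ioi 0) := by
    refine integrableOn_of_bound (R := R)
      (C := |p - 3| * (Real.exp (|p - 3| * (|τ₀| + 1)) * M)) ?_ ?_
    · exact ((continuous_const.mul (hQ0c.comp (hcurve τ₀))).aestronglyMeasurable).mul hwgtm
    · intro s hs
      by_cases hsR : s ≤ R
      · rw [Set.indicator_of_mem (show s ∈ Ioc (0:ℝ) R from ⟨hs, hsR⟩)]
        obtain ⟨m1, m2, m3, m4⟩ := hMle (τ₀, s)
          (hmemK τ₀ (Metric.mem_ball_self one_pos) s hs hsR)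
        have b1 := bound_mul_wgt (Real.exp_pos _)
          (hCexpB τ₀ (Metric.mem_ball_self one_pos)) m2 (hw0 s hs) (hw1 s hs)
        have hre : -(p - 3) * Real.exp (-(p - 3) * τ₀) * Q0f p v (τ₀, s) * wgt p s =
            (-(p - 3)) * (Real.exp (-(p - 3) * τ₀) * Q0f p v (τ₀, s) * wgt p s) := by ring
        rw [hre, abs_mul, abs_neg]
        exact mul_le_mul_of_nonneg_left b1 (abs_nonneg _)
      · push_neg at hsR
        rw [Set.indicator_of_notMem (fun hmem => absurd hmem.2 (not_le.mpr hsR))]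
        simp [hQ0v (τ₀, s) hsR]
  have hpt : EqOn (Phi' p v τ₀) (fun s : ℝ =>
      (pAs v (τ₀, s) * pB v (τ₀, s) * s ^ 2 + pA v (τ₀, s) * pBs v (τ₀, s) * s ^ 2 +
        pA v (τ₀, s) * pB v (τ₀, s) * (2 * s)) +
      -(p - 3) * Real.exp (-(p - 3) * τ₀) * Q0f p v (τ₀, s) * wgt p s) (Ioi 0) := by
    intro s hs
    have hs' : (0:ℝ) < s := hs
    have hsne : s ≠ 0 := ne_of_gt hs'
    have hpde := hsol τ₀ s hs'
    rw [htd2, hsd2, hsd] at hpde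
    have hsymB : pBt v (τ₀, s) = pAs v (τ₀, s) := pd_comm hreg (τ₀, s)
    have h2s : 2 / s * pB v (τ₀, s) * s ^ 2 = 2 * s * pB v (τ₀, s) := by
      field_simp
    have hAt' : pAt v (τ₀, s) * s ^ 2 = pBs v (τ₀, s) * s ^ 2 + 2 * s * pB v (τ₀, s) -
        Real.exp (-(p - 3) * τ₀) * (s / Real.sinh s) ^ (p - 1) *
          (|v τ₀ s| ^ (p - 1) * v τ₀ s) * s ^ 2 := by
      linear_combination s ^ 2 * hpde + h2s
    simp only [Phi', PPf, QDf, Q0f, Wf, wgt]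
    rw [hsymB]
    linear_combination pA v (τ₀, s) * hAt'
  have hsplit : (∫ s in Ioi (0:ℝ), Phi' p v τ₀ s) =
      (∫ s in Ioi (0:ℝ),
        (pAs v (τ₀, s) * pB v (τ₀, s) * s ^ 2 + pA v (τ₀, s) * pBs v (τ₀, s) * s ^ 2 +
          pA v (τ₀, s) * pB v (τ₀, s) * (2 * s))) +
      ∫ s in Ioi (0:ℝ), -(p - 3) * Real.exp (-(p - 3) * τ₀) * Q0f p v (τ₀, s) * wgt p s := by
    rw [setIntegral_congr_fun measurableSet_Ioi hpt]
    exact integral_add hdgInt hTInt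
  have hTval : (∫ s in Ioi (0:ℝ),
      -(p - 3) * Real.exp (-(p - 3) * τ₀) * Q0f p v (τ₀, s) * wgt p s) =
      -((p - 3) / (p + 1)) * ∫ s in Ioi (0:ℝ),
        Real.exp (-(p - 3) * τ₀) * (s / Real.sinh s) ^ (p - 1) * |v τ₀ s| ^ (p + 1) * s ^ 2 := by
    rw [← integral_const_mul]
    refine setIntegral_congr_fun measurableSet_Ioi fun s hs => ?_
    simp only [Q0f, wgt, Wf]
    field_simp
  have hfinal : (∫ s in Ioi (0:ℝ), Phi' p v τ₀ s) =
      -((p - 3) / (p + 1)) * ∫ s in Ioi (0:ℝ),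
        Real.exp (-(p - 3) * τ₀) * (s / Real.sinh s) ^ (p - 1) * |v τ₀ s| ^ (p + 1) * s ^ 2 := by
    rw [hsplit, hIBP, hTval, zero_add]
  exact hfinal ▸ hkey



theorem energy_eq (p : ℝ) (hp3 : 3 < p) (v : ℝ → ℝ → ℝ)
    (hreg : ContDiff ℝ 2 (Wf v)) (R : ℝ) (hR1 : 1 ≤ R)
    (hvR : ∀ τ s : ℝ, R ≤ s → v τ s = 0) :
    hypEnergy p v = fun τ => ∫ s in Ioi (0:ℝ), Phi p v τ s := by
  have hR0 : (0:ℝ) ≤ R := by linarith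
  have hp1 : (0:ℝ) < p + 1 := by linarith
  have hWd : Differentiable ℝ (Wf v) := hreg.differentiable (by norm_num)
  have hWc : Continuous (Wf v) := hreg.continuous
  have hA1 : ContDiff ℝ 1 (pA v) := contDiff_pd _ hreg
  have hB1 : ContDiff ℝ 1 (pB v) := contDiff_pd _ hreg
  have hAc : Continuous (pA v) := hA1.continuous
  have hBc : Continuous (pB v) := hB1.continuous
  have htd : ∀ τ s : ℝ, timeDeriv v τ s = pA v (τ, s) := fun τ s =>
    (hasDerivAt_pd_fst hWd τ s).deriv
  have hsd : ∀ τ s : ℝ, deriv (v τ) s = pB v (τ, s) := fun τ s =>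
    (hasDerivAt_pd_snd hWd τ s).deriv
  have hWv : ∀ z : ℝ × ℝ, R < z.2 → Wf v z = 0 := fun z hz => hvR z.1 z.2 hz.le
  have hAv : ∀ z, R < z.2 → pA v z = 0 := fun z hz => pd_zero_of_zero _ hWv hz
  have hBv : ∀ z, R < z.2 → pB v z = 0 := fun z hz => pd_zero_of_zero _ hWv hz
  have hQ0v : ∀ z : ℝ × ℝ, R < z.2 → Q0f p v z = 0 := by
    intro z hz
    simp [Q0f, hWv z hz, Real.zero_rpow (by linarith : p + 1 ≠ 0)]
  have hw0 : ∀ s : ℝ, 0 < s → 0 ≤ wgt p s := fun s hs =>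
    Real.rpow_nonneg (div_nonneg hs.le (Real.sinh_pos_iff.mpr hs).le) _
  have hw1 : ∀ s : ℝ, 0 < s → wgt p s ≤ 1 := by
    intro s hs
    refine Real.rpow_le_one (div_nonneg hs.le (Real.sinh_pos_iff.mpr hs).le) ?_ (by linarith)
    rw [div_le_one (Real.sinh_pos_iff.mpr hs)]
    exact (Real.self_lt_sinh_iff.mpr hs).le
  have hQ0c : Continuous (Q0f p v) :=
    (continuous_const.mul (hWc.abs.rpow_const fun z => Or.inr (by linarith))).mul
      (continuous_snd.pow 2)
  have hwgtm : AEStronglyMeasurable (wgt p) ((volume : Measure ℝ).restrict (Ioi 0)) := by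
    refine ContinuousOn.aestronglyMeasurable ?_ measurableSet_Ioi
    refine ContinuousOn.rpow_const ?_ fun s hs => Or.inr (by linarith)
    exact ContinuousOn.div continuousOn_id Real.continuous_sinh.continuousOn
      fun s hs => ne_of_gt (Real.sinh_pos_iff.mpr hs)
  have hcurve : ∀ τ : ℝ, Continuous fun s : ℝ => ((τ, s) : ℝ × ℝ) := fun τ =>
    continuous_const.prodMk continuous_id
  funext τ
  -- integrability of the three pieces
  have i1 : IntegrableOn (fun s : ℝ => (1/2 : ℝ) * (pB v (τ, s) ^ 2 * s ^ 2)) (Ioi 0) := by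
    refine integrableOn_of_cont hR0
      (continuous_const.mul (((hBc.comp (hcurve τ)).pow 2).mul (continuous_pow 2)))
      fun s hs => ?_
    simp [hBv (τ, s) hs]
  have i2 : IntegrableOn (fun s : ℝ => (1/2 : ℝ) * (pA v (τ, s) ^ 2 * s ^ 2)) (Ioi 0) := by
    refine integrableOn_of_cont hR0
      (continuous_const.mul (((hAc.comp (hcurve τ)).pow 2).mul (continuous_pow 2)))
      fun s hs => ?_
    simp [hAv (τ, s) hs]
  have i3 : IntegrableOn (fun s : ℝ => (1/(p+1) : ℝ) *
      (Real.exp (-(p - 3) * τ) * (s / Real.sinh s) ^ (p - 1) * |v τ s| ^ (p + 1) * s ^ 2))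
      (Ioi 0) := by
    obtain ⟨Mq, hMq⟩ := (isCompact_Icc : IsCompact (Icc (0:ℝ) R)).exists_bound_of_continuousOn
      (hQ0c.comp (hcurve τ)).continuousOn
    have heq : (fun s : ℝ => (1/(p+1) : ℝ) *
        (Real.exp (-(p - 3) * τ) * (s / Real.sinh s) ^ (p - 1) * |v τ s| ^ (p + 1) * s ^ 2)) =
        fun s : ℝ => Real.exp (-(p - 3) * τ) * Q0f p v (τ, s) * wgt p s := by
      funext s
      simp only [Q0f, wgt, Wf]
      ring
    rw [heq]
    refine integrableOn_of_bound (R := R) (C := Real.exp (-(p - 3) * τ) * Mq)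
      (((continuous_const.mul (hQ0c.comp (hcurve τ))).aestronglyMeasurable).mul hwgtm) ?_
    intro s hs
    by_cases hsR : s ≤ R
    · rw [Set.indicator_of_mem (show s ∈ Ioc (0:ℝ) R from ⟨hs, hsR⟩)]
      have m2 : |Q0f p v (τ, s)| ≤ Mq := by
        have := hMq s ⟨hs.le, hsR⟩
        rwa [Real.norm_eq_abs] at this
      exact bound_mul_wgt (Real.exp_pos _) le_rfl m2 (hw0 s hs) (hw1 s hs)
    · push_neg at hsR
      rw [Set.indicator_of_notMem (fun hmem => absurd hmem.2 (not_le.mpr hsR))]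
      simp [hQ0v (τ, s) hsR]
  show (1 / 2) * (∫ s in Ioi (0:ℝ), (deriv (v τ) s) ^ 2 * s ^ 2) +
      (1 / 2) * (∫ s in Ioi (0:ℝ), (timeDeriv v τ s) ^ 2 * s ^ 2) +
      (1 / (p + 1)) * (∫ s in Ioi (0:ℝ),
        Real.exp (-(p - 3) * τ) * (s / Real.sinh s) ^ (p - 1) * |v τ s| ^ (p + 1) * s ^ 2) =
      ∫ s in Ioi (0:ℝ), Phi p v τ s
  simp only [htd, hsd]
  have i12 : IntegrableOn (fun s : ℝ => (1/2 : ℝ) * (pB v (τ, s) ^ 2 * s ^ 2) +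
      (1/2 : ℝ) * (pA v (τ, s) ^ 2 * s ^ 2)) (Ioi 0) := i1.add i2
  rw [← integral_const_mul, ← integral_const_mul, ← integral_const_mul,
    ← integral_add i1 i2, ← integral_add i12 i3]
  refine setIntegral_congr_fun measurableSet_Ioi fun s hs => ?_
  simp only [Phi, P0f, Q0f, wgt, Wf]
  ring


end HypAux

/-- Monotonicity of the hyperbolic energy: for a sufficiently smooth,
decaying solution `ũ` of the equation in hyperbolic coordinates, the hyperbolic energy
satisfies `E'(τ) = -((p-3)/(p+1)) ∫ e^{-(p-3)τ}(s/sinh s)^{p-1}|ũ|^{p+1} s² ds ≤ 0`; in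
particular it is non-increasing. -/
theorem hyperbolic_energy_monotone (p : ℝ) (hp3 : 3 < p) (hp5 : p < 5)
    (v : ℝ → ℝ → ℝ)
    (hreg : ContDiff ℝ 2 (fun z : ℝ × ℝ => v z.1 z.2))
    (hdecay : ∃ R : ℝ, ∀ τ s : ℝ, R ≤ s → v τ s = 0)
    (hsol : ∀ τ s : ℝ, 0 < s →
      timeDeriv2 v τ s - deriv (deriv (v τ)) s - (2 / s) * deriv (v τ) s +
        Real.exp (-(p - 3) * τ) * (s / Real.sinh s) ^ (p - 1) *
          (|v τ s| ^ (p - 1) * v τ s) = 0) :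
    (∀ τ : ℝ,
      HasDerivAt (hypEnergy p v)
        (-((p - 3) / (p + 1)) * ∫ s in Set.Ioi (0 : ℝ),
          Real.exp (-(p - 3) * τ) * (s / Real.sinh s) ^ (p - 1) * |v τ s| ^ (p + 1) * s ^ 2) τ ∧
      -((p - 3) / (p + 1)) * (∫ s in Set.Ioi (0 : ℝ),
          Real.exp (-(p - 3) * τ) * (s / Real.sinh s) ^ (p - 1) * |v τ s| ^ (p + 1) * s ^ 2)
        ≤ 0) ∧
    Antitone (hypEnergy p v) := by
  obtain ⟨R₀, hR₀⟩ := hdecay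
  have hR1 : (1:ℝ) ≤ max R₀ 1 := le_max_right _ _
  have hvR : ∀ τ s : ℝ, max R₀ 1 ≤ s → v τ s = 0 := fun τ s hs =>
    hR₀ τ s (le_trans (le_max_left _ _) hs)
  have hreg' : ContDiff ℝ 2 (HypAux.Wf v) := hreg
  have hE := HypAux.energy_eq p hp3 v hreg' (max R₀ 1) hR1 hvR
  have hder : ∀ τ₀ : ℝ, HasDerivAt (hypEnergy p v)
      (-((p - 3) / (p + 1)) * ∫ s in Ioi (0:ℝ),
        Real.exp (-(p - 3) * τ₀) * (s / Real.sinh s) ^ (p - 1) * |v τ₀ s| ^ (p + 1) * s ^ 2)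
      τ₀ := by
    intro τ₀
    rw [hE]
    exact HypAux.main_aux p hp3 v hreg' (max R₀ 1) hR1 hvR hsol τ₀
  have hnonpos : ∀ τ₀ : ℝ, -((p - 3) / (p + 1)) * (∫ s in Ioi (0:ℝ),
      Real.exp (-(p - 3) * τ₀) * (s / Real.sinh s) ^ (p - 1) * |v τ₀ s| ^ (p + 1) * s ^ 2)
      ≤ 0 := by
    intro τ₀
    have hint : 0 ≤ ∫ s in Ioi (0:ℝ),
        Real.exp (-(p - 3) * τ₀) * (s / Real.sinh s) ^ (p - 1) * |v τ₀ s| ^ (p + 1) * s ^ 2 := by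
      refine setIntegral_nonneg measurableSet_Ioi fun s hs => ?_
      have h1 : (0:ℝ) ≤ s / Real.sinh s :=
        div_nonneg (le_of_lt hs) (Real.sinh_pos_iff.mpr hs).le
      exact mul_nonneg (mul_nonneg (mul_nonneg (Real.exp_pos _).le
        (Real.rpow_nonneg h1 _)) (Real.rpow_nonneg (abs_nonneg _) _)) (sq_nonneg s)
    have hc : -((p - 3) / (p + 1)) ≤ 0 := by
      have : 0 ≤ (p - 3) / (p + 1) := div_nonneg (by linarith) (by linarith)
      linarith
    exact mul_nonpos_iff.mpr (Or.inr ⟨hc, hint⟩)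
  refine ⟨fun τ₀ => ⟨hder τ₀, hnonpos τ₀⟩, ?_⟩
  apply antitone_of_deriv_nonpos
  · exact fun τ => (hder τ).differentiableAt
  · intro τ
    rw [(hder τ).deriv]
    exact hnonpos τ


end
end
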